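/- Let λ > 0 and s₀ < T be real numbers, let c ≥ 0, α ≥ 0, β ≥ 0, C ≥ 0, D ≥ 0 be constants with α ≥ β·C. Let y : ℝ → ℝ be differentiable on [s₀, T), and let z, h : ℝ → ℝ be continuous and nonnegative on [s₀, T). Assume: (i) y'(t) ≤ −λ·y(t) − α·z(t) + β·h(t) + c for all t ∈ [s₀, T); and (ii) ∫_{s₀}^{t} e^{λs}·h(s) ds ≤ C·∫_{s₀}^{t} e^{λs}·z(s) ds + D·e^{λs₀} for all t ∈ [s₀, T). Then for every t ∈ [s₀, T), y(t) ≤ e^{−λ(t−s₀)}·y(s₀) + c/λ + β·D; in particular, y is bounded above on [s₀, T) by a constant independent of t and of T. -/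

import Mathlib

/-!
Multiply by the integrating factor `e^{λt}` and shift `y` by its equilibrium `c/λ`: then
`e^{λt}(y(t) - c/λ) - e^{λs₀}(y(s₀) - c/λ) ≤ ∫_{s₀}^t e^{λs}(βh - αz) ds`, and by (ii) together
with `βC ≤ α` the right-hand side is at most `βD e^{λs₀}`, since `z ≥ 0`.
-/

open Real Set MeasureTheory intervalIntegral

theorem exp_mul_sub_le_integral_of_hasDerivAt_le {l a b : ℝ} {y y' f : ℝ → ℝ} (hab : a ≤ b)
    (hcont : ContinuousOn y (Icc a b)) (hy : ∀ x ∈ Ioo a b, HasDerivAt y (y' x) x)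
    (hf : IntegrableOn (fun s => exp (l * s) * f s) (Icc a b))
    (hle : ∀ x ∈ Ioo a b, y' x ≤ -l * y x + f x) :
    exp (l * b) * y b - exp (l * a) * y a ≤ ∫ s in a..b, exp (l * s) * f s := by
  have hexp (x : ℝ) : HasDerivAt (fun s => exp (l * s)) (exp (l * x) * l) x := by
    simpa using ((hasDerivAt_id x).const_mul l).exp
  refine sub_le_integral_of_hasDeriv_right_of_le hab ?_
    (fun x hx => ((hexp x).mul (hy x hx)).hasDerivWithinAt) hf fun x hx => ?_
  · exact (continuous_exp.comp (continuous_const_mul l)).continuousOn.mul hcont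
  · have := mul_le_mul_of_nonneg_left (hle x hx) (exp_pos (l * x)).le
    linarith

theorem le_exp_neg_mul_add_of_exp_mul_sub_le {l a b Y Y₀ q B : ℝ} (hl : 0 ≤ l) (hab : a ≤ b)
    (hq : 0 ≤ q) (hB : 0 ≤ B)
    (h : exp (l * b) * (Y - q) - exp (l * a) * (Y₀ - q) ≤ exp (l * a) * B) :
    Y ≤ exp (-l * (b - a)) * Y₀ + q + B := by
  set e := exp (-l * (b - a))
  have he : exp (l * a) = exp (l * b) * e := by rw [← exp_add]; ring_nf
  have he₀ : 0 ≤ e := (exp_pos _).le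
  have he₁ : e ≤ 1 := exp_le_one_iff.2 (mul_nonpos_of_nonpos_of_nonneg (neg_nonpos.2 hl)
    (sub_nonneg.2 hab))
  have hY : Y - q ≤ e * (Y₀ - q + B) :=
    le_of_mul_le_mul_left (by rw [he] at h; linarith) (exp_pos (l * b))
  nlinarith [mul_nonneg he₀ hq, mul_le_mul_of_nonneg_right he₁ hB]

open intervalIntegral in
theorem absorption_lemma_general
    (l s₀ T c α β C D : ℝ)
    (hl : 0 < l)
    (hc : 0 ≤ c) (hβ : 0 ≤ β) (hD : 0 ≤ D)
    (habsorb : β * C ≤ α)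
    (y y' z h : ℝ → ℝ)
    (hy : ∀ t ∈ Set.Ico s₀ T, HasDerivAt y (y' t) t)
    (hz : ContinuousOn z (Set.Ico s₀ T)) (hzpos : ∀ t ∈ Set.Ico s₀ T, 0 ≤ z t)
    (hh : ContinuousOn h (Set.Ico s₀ T))
    (hineq : ∀ t ∈ Set.Ico s₀ T, y' t ≤ -l * y t - α * z t + β * h t + c)
    (hint : ∀ t ∈ Set.Ico s₀ T,
      (∫ s in s₀..t, Real.exp (l * s) * h s) ≤
        C * (∫ s in s₀..t, Real.exp (l * s) * z s) + D * Real.exp (l * s₀)) :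
    ∀ t ∈ Set.Ico s₀ T,
      y t ≤ Real.exp (-l * (t - s₀)) * y s₀ + c / l + β * D := by
  rintro t ⟨hs₀t, htT⟩
  have hsub : Icc s₀ t ⊆ Ico s₀ T := Icc_subset_Ico_right htT
  have hzc : ContinuousOn z (Icc s₀ t) := hz.mono hsub
  have hhc : ContinuousOn h (Icc s₀ t) := hh.mono hsub
  have hzI : IntervalIntegrable (fun s => exp (l * s) * z s) volume s₀ t := by
    apply ContinuousOn.intervalIntegrable_of_Icc hs₀t; fun_prop
  have hhI : IntervalIntegrable (fun s => exp (l * s) * h s) volume s₀ t := by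
    apply ContinuousOn.intervalIntegrable_of_Icc hs₀t; fun_prop
  have hgrowth := exp_mul_sub_le_integral_of_hasDerivAt_le (l := l) (y := fun x => y x - c / l)
    (f := fun s => -α * z s + β * h s) hs₀t
    (fun x hx => ((hy x (hsub hx)).continuousAt.sub continuousAt_const).continuousWithinAt)
    (fun x hx => (hy x (hsub (Ioo_subset_Icc_self hx))).sub_const _)
    (by apply ContinuousOn.integrableOn_Icc; fun_prop)
    (fun x hx => by
      have := hineq x (hsub (Ioo_subset_Icc_self hx))
      field_simp
      linarith)
  have hsplit : ∫ s in s₀..t, exp (l * s) * (-α * z s + β * h s) =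
      -α * (∫ s in s₀..t, exp (l * s) * z s) + β * ∫ s in s₀..t, exp (l * s) * h s := by
    simp only [mul_add, mul_left_comm (exp _)]
    rw [integral_add (hzI.const_mul _) (hhI.const_mul _), intervalIntegral.integral_const_mul,
      intervalIntegral.integral_const_mul]
  have hIz : 0 ≤ ∫ s in s₀..t, exp (l * s) * z s :=
    integral_nonneg hs₀t fun u hu => mul_nonneg (exp_pos _).le (hzpos u (hsub hu))
  refine le_exp_neg_mul_add_of_exp_mul_sub_le hl.le hs₀t (div_nonneg hc hl.le)
    (mul_nonneg hβ hD) ?_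
  have hβh := mul_le_mul_of_nonneg_left (hint t ⟨hs₀t, htT⟩) hβ
  have hαz := mul_le_mul_of_nonneg_right habsorb hIz
  calc _ ≤ _ := hgrowth
    _ = _ := hsplit
    _ ≤ _ := by linarith

open intervalIntegral in
/-- Abstract absorption lemma (analytic core of Lemma 3.1): if
    y' ≤ −λy − αz + βh + c on [s₀,T) and the weighted integral of h is
    controlled by that of z with α ≥ βC, then
    y(t) ≤ e^{−λ(t−s₀)} y(s₀) + c/λ + βD on [s₀,T). -/
theorem absorption_lemma
    (l s₀ T c α β C D : ℝ)
    (hl : 0 < l) (hsT : s₀ < T)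
    (hc : 0 ≤ c) (hα : 0 ≤ α) (hβ : 0 ≤ β) (hC : 0 ≤ C) (hD : 0 ≤ D)
    (habsorb : β * C ≤ α)
    (y y' z h : ℝ → ℝ)
    (hy : ∀ t ∈ Set.Ico s₀ T, HasDerivAt y (y' t) t)
    (hz : ContinuousOn z (Set.Ico s₀ T)) (hzpos : ∀ t ∈ Set.Ico s₀ T, 0 ≤ z t)
    (hh : ContinuousOn h (Set.Ico s₀ T)) (hhpos : ∀ t ∈ Set.Ico s₀ T, 0 ≤ h t)
    (hineq : ∀ t ∈ Set.Ico s₀ T, y' t ≤ -l * y t - α * z t + β * h t + c)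
    (hint : ∀ t ∈ Set.Ico s₀ T,
      (∫ s in s₀..t, Real.exp (l * s) * h s) ≤
        C * (∫ s in s₀..t, Real.exp (l * s) * z s) + D * Real.exp (l * s₀)) :
    ∀ t ∈ Set.Ico s₀ T,
      y t ≤ Real.exp (-l * (t - s₀)) * y s₀ + c / l + β * D :=
  absorption_lemma_general l s₀ T c α β C D hl hc hβ hD habsorb y y' z h hy hz hzpos hh hineq hint
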